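/- arXiv:2604.11335 — 2 statements merged into one kernel-verified Lean document; each statement's English description precedes it below -/
import Mathlib

section
/- For every (u,v) ∈ [0,T]² and every 1 ≤ j ≤ m with jnh ≤ n, | Σ_{i∈I_j} ( R(u,v;i/n) − R(u,v;s_j) ) | ≤ C·(h/2 + n·h³/4); in particular, if n·h² ≥ 1/2 this bound is at most 2C·n·h³. (Deterministic core of Proposition 3.2 of the paper.) -/
/-!
Expanding `R(u,v;·)` to first order around the midpoint `s_j` of the block, the linear terms add
up to `R′(u,v;s_j) · Σ (i/n − s_j) = R′(u,v;s_j) · h/2`: the grid points `i/n`, `i ∈ I_j`, are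
`N = nh` points spaced `1/n` apart whose centre is `s_j + 1/(2n)`, not `s_j`. Each of the `N`
quadratic remainders is at most `C (h/2)²`, which gives `C (h/2 + N h²/4) = C (h/2 + n h³/4)`.
-/

open Finset

theorem abs_sum_sub_le_of_taylor {ι : Type*} (s : Finset ι) (f : ℝ → ℝ) (t : ι → ℝ)
    {c f' C δ : ℝ} (hf' : |f'| ≤ C)
    (hTaylor : ∀ i ∈ s, |f (t i) - f c - (t i - c) * f'| ≤ C * (t i - c) ^ 2)
    (hdist : ∀ i ∈ s, |t i - c| ≤ δ) :
    |∑ i ∈ s, (f (t i) - f c)| ≤ C * |∑ i ∈ s, (t i - c)| + #s * (C * δ ^ 2) := by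
  have hC : 0 ≤ C := (abs_nonneg _).trans hf'
  have hsplit : ∑ i ∈ s, (f (t i) - f c)
      = (∑ i ∈ s, (t i - c)) * f' + ∑ i ∈ s, (f (t i) - f c - (t i - c) * f') := by
    rw [sum_mul, ← sum_add_distrib]
    exact sum_congr rfl fun i _ => by ring
  have hremainder : ∀ i ∈ s, |f (t i) - f c - (t i - c) * f'| ≤ C * δ ^ 2 := fun i hi =>
    (hTaylor i hi).trans <| mul_le_mul_of_nonneg_left
      (by rw [← sq_abs]; exact pow_le_pow_left₀ (abs_nonneg _) (hdist i hi) 2) hC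
  calc |∑ i ∈ s, (f (t i) - f c)|
      ≤ |∑ i ∈ s, (t i - c)| * |f'| + ∑ i ∈ s, |f (t i) - f c - (t i - c) * f'| := by
        rw [hsplit, ← abs_mul]
        exact (abs_add_le _ _).trans (add_le_add_right (abs_sum_le_sum_abs _ _) _)
    _ ≤ |∑ i ∈ s, (t i - c)| * C + #s • (C * δ ^ 2) := by
        gcongr
        exact sum_le_card_nsmul _ _ _ hremainder
    _ = C * |∑ i ∈ s, (t i - c)| + #s * (C * δ ^ 2) := by rw [nsmul_eq_mul, mul_comm]

theorem sum_Ioc_natCast (a N : ℕ) :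
    ∑ i ∈ Ioc a (a + N), (i : ℝ) = N * a + N * (N + 1) / 2 := by
  induction N with
  | zero => simp
  | succ N ih =>
    rw [← add_assoc, sum_Ioc_succ_top (Nat.le_add_right a N), ih]
    push_cast
    ring

theorem sum_Ioc_div_sub_midpoint (a N n : ℕ) :
    ∑ i ∈ Ioc a (a + N), ((i : ℝ) / n - (a + N / 2) / n) = N / n / 2 := by
  simp_rw [← sub_div]
  rw [← sum_div, sum_sub_distrib, sum_Ioc_natCast, sum_const, Nat.card_Ioc, Nat.add_sub_cancel_left,
    nsmul_eq_mul]
  ring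

theorem abs_div_sub_midpoint_le {a N i : ℕ} (n : ℕ) (hi : i ∈ Ioc a (a + N)) :
    |(i : ℝ) / n - (a + N / 2) / n| ≤ N / n / 2 := by
  obtain ⟨hai, hiN⟩ := mem_Ioc.mp hi
  have hai' : (a : ℝ) ≤ i := by exact_mod_cast hai.le
  have hiN' : (i : ℝ) ≤ a + N := by exact_mod_cast hiN
  rw [← sub_div, abs_div, Nat.abs_cast, div_right_comm]
  gcongr
  rw [abs_le]
  constructor <;> linarith

theorem abs_sum_Ioc_sub_midpoint_le (f f' : ℝ → ℝ) {C : ℝ} {a N n : ℕ} (hblock : a + N ≤ n)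
    (hf' : ∀ s ∈ Set.Icc (0:ℝ) 1, |f' s| ≤ C)
    (hTaylor : ∀ s ∈ Set.Icc (0:ℝ) 1, ∀ t ∈ Set.Icc (0:ℝ) 1,
      |f t - f s - (t - s) * f' s| ≤ C * (t - s) ^ 2) :
    |∑ i ∈ Ioc a (a + N), (f ((i : ℝ) / n) - f ((a + N / 2) / n))|
      ≤ C * (N / n / 2 + n * (N / n) ^ 3 / 4) := by
  set c : ℝ := (a + N / 2) / n
  have hblock' : (a : ℝ) + N ≤ n := by exact_mod_cast hblock
  have hc : c ∈ Set.Icc (0:ℝ) 1 := ⟨by positivity, div_le_one_of_le₀ (by linarith) (by positivity)⟩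
  have hgrid : ∀ i ∈ Ioc a (a + N), (i : ℝ) / n ∈ Set.Icc (0:ℝ) 1 := by
    intro i hi
    have hin : (i : ℝ) ≤ n := by exact_mod_cast (mem_Ioc.mp hi).2.trans hblock
    exact ⟨by positivity, div_le_one_of_le₀ hin (by positivity)⟩
  have hcard : (N : ℝ) * (N / n / 2) ^ 2 = n * (N / n) ^ 3 / 4 := by
    rcases eq_or_ne n 0 with rfl | hn
    · obtain rfl : N = 0 := by omega
      simp
    · field_simp; ring
  have hbound := abs_sum_sub_le_of_taylor (Ioc a (a + N)) f (fun i : ℕ => (i : ℝ) / n)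
    (hf' c hc) (fun i hi => hTaylor c hc _ (hgrid i hi)) (fun i hi => abs_div_sub_midpoint_le n hi)
  rw [sum_Ioc_div_sub_midpoint, Nat.card_Ioc, Nat.add_sub_cancel_left,
    abs_of_nonneg (show (0:ℝ) ≤ N / n / 2 by positivity)] at hbound
  rw [mul_add, ← hcard]
  linarith

theorem stmt_6_general (T : ℝ) (R R' : ℝ → ℝ → ℝ → ℝ) (C : ℝ)
    (hR'bd : ∀ u ∈ Set.Icc (0:ℝ) T, ∀ v ∈ Set.Icc (0:ℝ) T, ∀ s ∈ Set.Icc (0:ℝ) 1,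
      |R' u v s| ≤ C)
    (hTaylor : ∀ u ∈ Set.Icc (0:ℝ) T, ∀ v ∈ Set.Icc (0:ℝ) T,
      ∀ s ∈ Set.Icc (0:ℝ) 1, ∀ t ∈ Set.Icc (0:ℝ) 1,
      |R u v t - R u v s - (t - s) * R' u v s| ≤ C * (t - s)^2)
    (n N : ℕ)
    (h : ℝ) (hh : h = (N : ℝ) / n)
    (j : ℕ) (hj : 1 ≤ j) (hjn : j * N ≤ n)
    (sj : ℝ) (hsj : sj = ((j : ℝ) - 1/2) * h)
    (u v : ℝ) (hu : u ∈ Set.Icc (0:ℝ) T) (hv : v ∈ Set.Icc (0:ℝ) T) :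
    |∑ i ∈ Finset.Ioc ((j-1)*N) (j*N), (R u v ((i : ℝ)/n) - R u v sj)|
        ≤ C * (h/2 + n * h^3/4) ∧
    ((1:ℝ)/2 ≤ n * h^2 →
      |∑ i ∈ Finset.Ioc ((j-1)*N) (j*N), (R u v ((i : ℝ)/n) - R u v sj)|
        ≤ 2 * C * n * h^3) := by
  obtain ⟨k, rfl⟩ : ∃ k, j = k + 1 := ⟨j - 1, by omega⟩
  have hblock : (k + 1) * N = k * N + N := by ring
  have hmid : sj = ((k * N : ℕ) + N / 2) / n := by rw [hsj, hh]; push_cast; ring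
  have hfirst := abs_sum_Ioc_sub_midpoint_le (R u v) (R' u v) (hblock ▸ hjn)
    (hR'bd u hu v hv) (hTaylor u hu v hv)
  rw [← hmid, ← hh] at hfirst
  simp only [Nat.add_sub_cancel, hblock]
  refine ⟨hfirst, fun hnh => hfirst.trans ?_⟩
  have hC : 0 ≤ C := (abs_nonneg _).trans (hR'bd u hu v hv 0 ⟨le_rfl, zero_le_one⟩)
  have hh0 : 0 ≤ h := by rw [hh]; positivity
  nlinarith [mul_le_mul_of_nonneg_left hnh hh0, mul_nonneg hC hh0]

/-- deterministic core of Proposition 3.2 of the paper.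
If `R(u,v;·)` admits the first-order Taylor bound with constant `C`
(`|R'| ≤ C` and `|R(u,v;t) − R(u,v;s) − (t−s) R'(u,v;s)| ≤ C (t−s)²`),
then the block sum of deviations from the midpoint value satisfies
`|Σ_{i∈I_j} (R(u,v;i/n) − R(u,v;s_j))| ≤ C (h/2 + n h³/4)`,
and if moreover `n h² ≥ 1/2` this is at most `2 C n h³`. -/
theorem stmt_6 (T : ℝ) (hT : 0 < T) (R R' : ℝ → ℝ → ℝ → ℝ) (C : ℝ) (hC : 0 ≤ C)
    (hR'bd : ∀ u ∈ Set.Icc (0:ℝ) T, ∀ v ∈ Set.Icc (0:ℝ) T, ∀ s ∈ Set.Icc (0:ℝ) 1,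
      |R' u v s| ≤ C)
    (hTaylor : ∀ u ∈ Set.Icc (0:ℝ) T, ∀ v ∈ Set.Icc (0:ℝ) T,
      ∀ s ∈ Set.Icc (0:ℝ) 1, ∀ t ∈ Set.Icc (0:ℝ) 1,
      |R u v t - R u v s - (t - s) * R' u v s| ≤ C * (t - s)^2)
    (n N : ℕ) (hn : 0 < n) (hN : 0 < N)
    (h : ℝ) (hh : h = (N : ℝ) / n)
    (j : ℕ) (hj : 1 ≤ j) (hjn : j * N ≤ n)
    (sj : ℝ) (hsj : sj = ((j : ℝ) - 1/2) * h)
    (u v : ℝ) (hu : u ∈ Set.Icc (0:ℝ) T) (hv : v ∈ Set.Icc (0:ℝ) T) :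
    |∑ i ∈ Finset.Ioc ((j-1)*N) (j*N), (R u v ((i : ℝ)/n) - R u v sj)|
        ≤ C * (h/2 + n * h^3/4) ∧
    ((1:ℝ)/2 ≤ n * h^2 →
      |∑ i ∈ Finset.Ioc ((j-1)*N) (j*N), (R u v ((i : ℝ)/n) - R u v sj)|
        ≤ 2 * C * n * h^3) :=
  stmt_6_general T R R' C hR'bd hTaylor n N h hh j hj hjn sj hsj u v hu hv
end

section
/- Let N be a positive integer, u₁,…,u_N ∈ ℝ, and let H₁,…,H_N : ℝ → ℝ be non-increasing functions; set H̲(x) = min_{1≤i≤N} H_i(x), H̄(x) = max_{1≤i≤N} H_i(x), and x_i = H_i(u_i) for each i. For an integer 0 ≤ r < N, let u_{(r+1)} denote the (r+1)-th smallest value among u₁,…,u_N and x_{(N−r)} the (N−r)-th smallest value among x₁,…,x_N. Then H̲(u_{(r+1)}) ≤ x_{(N−r)} ≤ H̄(u_{(r+1)}). -/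
open scoped Classical in
/-- The `r`-th smallest value among `{x i : i ∈ I}` (for `1 ≤ r ≤ |I|`),
defined as `inf {t : #{i ∈ I : x i ≤ t} ≥ r}`. -/
noncomputable def orderStat {ι : Type*} (I : Finset ι) (x : ι → ℝ) (r : ℕ) : ℝ :=
  sInf {t : ℝ | r ≤ (I.filter fun i => x i ≤ t).card}

open Finset

namespace orderStat

variable {ι : Type*} (I : Finset ι) (x : ι → ℝ) {k : ℕ}

open scoped Classical in
/- The infimum is attained at a sample value: shrinking `t` down to the largest `x i ≤ t` keeps
the count, so the least such sample value is a least element. -/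
theorem isLeast (hk : 1 ≤ k) (hkI : k ≤ #I) :
    IsLeast {t : ℝ | k ≤ #{i ∈ I | x i ≤ t}} (orderStat I x k) := by
  have shrink : ∀ t, k ≤ #{i ∈ I | x i ≤ t} →
      ∃ i ∈ I, x i ≤ t ∧ k ≤ #{j ∈ I | x j ≤ x i} := by
    intro t ht
    obtain ⟨i, hi, hmax⟩ := exists_max_image {i ∈ I | x i ≤ t} x
      (card_pos.mp (lt_of_lt_of_le hk ht))
    refine ⟨i, (mem_filter.mp hi).1, (mem_filter.mp hi).2, ht.trans (card_le_card ?_)⟩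
    exact fun j hj => mem_filter.mpr ⟨(mem_filter.mp hj).1, hmax j hj⟩
  have hI : I.Nonempty := card_pos.mp (lt_of_lt_of_le hk hkI)
  have hJ : ({i ∈ I | k ≤ #{j ∈ I | x j ≤ x i}}).Nonempty := by
    obtain ⟨i₀, hi₀⟩ := hI
    obtain ⟨i, hiI, -, hi⟩ := shrink (I.sup' ⟨i₀, hi₀⟩ x)
      (by rwa [filter_true_of_mem fun j hj => le_sup' x hj])
    exact ⟨i, mem_filter.mpr ⟨hiI, hi⟩⟩
  obtain ⟨i₀, hi₀, hmin⟩ := exists_min_image _ x hJ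
  have hleast : IsLeast {t : ℝ | k ≤ #{i ∈ I | x i ≤ t}} (x i₀) := by
    refine ⟨(mem_filter.mp hi₀).2, fun t ht => ?_⟩
    obtain ⟨i, hiI, hit, hi⟩ := shrink t ht
    exact (hmin i (mem_filter.mpr ⟨hiI, hi⟩)).trans hit
  rw [orderStat, hleast.csInf_eq]
  exact hleast

open scoped Classical in
theorem card_filter_lt_lt (hk : 1 ≤ k) (hkI : k ≤ #I) :
    #{i ∈ I | x i < orderStat I x k} < k := by
  by_contra! hge
  obtain ⟨i, hi, hmax⟩ := exists_max_image {i ∈ I | x i < orderStat I x k} x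
    (card_pos.mp (lt_of_lt_of_le hk hge))
  have hmem : k ≤ #{j ∈ I | x j ≤ x i} := hge.trans <| card_le_card fun j hj =>
    mem_filter.mpr ⟨(mem_filter.mp hj).1, hmax j hj⟩
  exact (isLeast I x hk hkI).2 hmem |>.not_gt (mem_filter.mp hi).2

end orderStat

section Antitone

variable {ι : Type*} [Fintype ι] (u : ι → ℝ) (H : ι → ℝ → ℝ) {r : ℕ}

open scoped Classical in
/- Pigeonhole: `r + 1` indices have `u i ≤ a` and `N - r` have `H i (u i) ≤ c`, so one index has
both, and antitonicity gives `H i a ≤ H i (u i) ≤ c`. -/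
theorem iInf_le_orderStat_of_antitone (hH : ∀ i, Antitone (H i)) (hr : r < Fintype.card ι) :
    ⨅ i, H i (orderStat univ u (r + 1)) ≤
      orderStat univ (fun i => H i (u i)) (Fintype.card ι - r) := by
  set a := orderStat univ u (r + 1)
  set c := orderStat univ (fun i => H i (u i)) (Fintype.card ι - r)
  have hu : r + 1 ≤ #{i | u i ≤ a} :=
    (orderStat.isLeast univ u (k := r + 1) (by omega) (by simpa using hr)).1
  have hx : Fintype.card ι - r ≤ #{i | H i (u i) ≤ c} :=
    (orderStat.isLeast univ _ (k := Fintype.card ι - r) (by omega) (by simp)).1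
  obtain ⟨i, hi⟩ := inter_nonempty_of_card_lt_card_add_card (subset_univ _) (subset_univ _)
    (show #(univ : Finset ι) < #{i | u i ≤ a} + #{i | H i (u i) ≤ c} by
      rw [card_univ]; omega)
  simp only [mem_inter, mem_filter, mem_univ, true_and] at hi
  calc ⨅ j, H j a ≤ H i a := ciInf_le (Finite.bddBelow_range _) i
    _ ≤ H i (u i) := hH i hi.1
    _ ≤ c := hi.2

open scoped Classical in
/- Fewer than `r + 1` indices have `u i < a`, so at least `N - r` have
`H i (u i) ≤ H i a ≤ ⨆ j, H j a`. -/
theorem orderStat_le_iSup_of_antitone (hH : ∀ i, Antitone (H i)) (hr : r < Fintype.card ι) :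
    orderStat univ (fun i => H i (u i)) (Fintype.card ι - r) ≤
      ⨆ i, H i (orderStat univ u (r + 1)) := by
  set a := orderStat univ u (r + 1)
  have hlt : #{i | u i < a} < r + 1 :=
    orderStat.card_filter_lt_lt univ u (by omega) (by simpa using hr)
  have hge : Fintype.card ι - r ≤ #{i | a ≤ u i} := by
    have := card_filter_add_card_filter_not (s := univ) (fun i => u i < a)
    simp only [not_lt, card_univ] at this
    omega
  refine (orderStat.isLeast univ _ (k := Fintype.card ι - r) (by omega) (by simp)).2
    (hge.trans (card_le_card ?_))
  intro i hi
  simp only [mem_filter, mem_univ, true_and] at hi ⊢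
  calc H i (u i) ≤ H i a := hH i hi
    _ ≤ ⨆ j, H j a := le_ciSup (Finite.bddAbove_range fun j => H j a) i

end Antitone

theorem stmt_12_general (N : ℕ) (u : Fin N → ℝ) (H : Fin N → ℝ → ℝ)
    (hH : ∀ i, Antitone (H i)) (x : Fin N → ℝ) (hx : ∀ i, x i = H i (u i))
    (r : ℕ) (hr : r < N) :
    (⨅ i, H i (orderStat Finset.univ u (r + 1))) ≤ orderStat Finset.univ x (N - r) ∧
    orderStat Finset.univ x (N - r) ≤ ⨆ i, H i (orderStat Finset.univ u (r + 1)) := by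
  obtain rfl : x = fun i => H i (u i) := funext hx
  have hr' : r < Fintype.card (Fin N) := by simpa using hr
  have lower := iInf_le_orderStat_of_antitone u H hH hr'
  have upper := orderStat_le_iSup_of_antitone u H hH hr'
  simp only [Fintype.card_fin] at lower upper
  exact ⟨lower, upper⟩

/-- order-statistic sandwich under non-increasing transformations:
with `x_i = H_i(u_i)` for non-increasing `H_i`, `H̲ = min_i H_i`, `H̄ = max_i H_i`,
one has `H̲(u_{(r+1)}) ≤ x_{(N−r)} ≤ H̄(u_{(r+1)})` for `0 ≤ r < N`. -/
theorem stmt_12 (N : ℕ) (hN : 0 < N) (u : Fin N → ℝ) (H : Fin N → ℝ → ℝ)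
    (hH : ∀ i, Antitone (H i)) (x : Fin N → ℝ) (hx : ∀ i, x i = H i (u i))
    (r : ℕ) (hr : r < N) :
    (⨅ i, H i (orderStat Finset.univ u (r + 1))) ≤ orderStat Finset.univ x (N - r) ∧
    orderStat Finset.univ x (N - r) ≤ ⨆ i, H i (orderStat Finset.univ u (r + 1)) :=
  stmt_12_general N u H hH x hx r hr
end
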